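/- The double series ∑_{m,n≥0} 1/((n+1/2)(m+n+1)²) converges and equals (7/2) ζ(3). -/

import Mathlib

/-!
Write `S(b) = ∑ 1/((n+b)(m+n+1)²)` and `G(a,b) = ∑ 1/((m+a)(n+b)(m+n+a+b))`, whose terms are
`recipMulSumSq b 1` and `recipProdSum a b`; the series in question is `S(1/2)`.

* Summing `G(1,b)` over `n` telescopes, and the resulting row sums are exactly the antidiagonal
  sums of `S(b)`; hence `G(1,b) = S(b)`.
* Partial fractions give `G(a,a) = 2 ∑ 1/((n+a)(m+n+2a)²)`. For `a = 1/2` this is `G(1/2,1/2) = 2 S(1/2)`;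
  for `a = 1`, comparing with `S(1) = G(1,1)` after removing its row `m = 0` (which is `ζ(3)`)
  gives `G(1,1) = 2 ζ(3)`.
* Splitting `G(1,1)` according to the parities of `m` and `n` gives
  `8 G(1,1) = G(1/2,1/2) + 2 G(1,1/2) + G(1,1)`, i.e. `14 ζ(3) = 4 S(1/2)`.
-/

open Filter Finset Topology

theorem HasSum.prod_even_add_odd {M : Type*} [AddCommMonoid M] [TopologicalSpace M]
    [ContinuousAdd M] {f : ℕ × ℕ → M} {a b c d : M}
    (h₀₀ : HasSum (fun p : ℕ × ℕ ↦ f (2 * p.1, 2 * p.2)) a)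
    (h₀₁ : HasSum (fun p : ℕ × ℕ ↦ f (2 * p.1, 2 * p.2 + 1)) b)
    (h₁₀ : HasSum (fun p : ℕ × ℕ ↦ f (2 * p.1 + 1, 2 * p.2)) c)
    (h₁₁ : HasSum (fun p : ℕ × ℕ ↦ f (2 * p.1 + 1, 2 * p.2 + 1)) d) :
    HasSum f (a + b + c + d) := by
  let e : (ℕ × ℕ ⊕ ℕ × ℕ) ⊕ (ℕ × ℕ ⊕ ℕ × ℕ) ≃ ℕ × ℕ :=
    ((Equiv.prodSumDistrib ℕ ℕ ℕ).sumCongr (Equiv.prodSumDistrib ℕ ℕ ℕ)).symm.trans <|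
      (Equiv.sumProdDistrib ℕ ℕ (ℕ ⊕ ℕ)).symm.trans <|
        Equiv.natSumNatEquivNat.prodCongr Equiv.natSumNatEquivNat
  rw [← e.hasSum_iff, add_assoc (a + b)]
  refine (HasSum.sum ?_ ?_).sum (HasSum.sum ?_ ?_) <;>
    simpa [e, Function.comp_def]

theorem Summable.tsum_prod_eq_tsum_zero_add {α : Type*} [AddCommGroup α] [UniformSpace α]
    [IsUniformAddGroup α] [CompleteSpace α] [T2Space α] {f : ℕ × ℕ → α} (hf : Summable f) :
    ∑' p, f p = ∑' n, f (0, n) + ∑' p : ℕ × ℕ, f (p.1 + 1, p.2) := by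
  have hinj : Function.Injective fun p : ℕ × ℕ ↦ (p.1 + 1, p.2) := fun p q h ↦ by
    simpa [Prod.ext_iff] using h
  have hshift := (hf.comp_injective hinj).tsum_prod
  simp only [Function.comp_apply] at hshift
  rw [hf.tsum_prod, hshift, tsum_eq_zero_add' ((summable_nat_add_iff 1).2 hf.prod)]

theorem HasSum.of_sum_antidiagonal_of_nonneg {f : ℕ × ℕ → ℝ} {a : ℝ} (hf : 0 ≤ f)
    (h : HasSum (fun n ↦ ∑ p ∈ antidiagonal n, f p) a) : HasSum f a := by
  let e := Finset.HasAntidiagonal.sigmaAntidiagonalEquivProd (A := ℕ)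
  have hfiber (n : ℕ) : ∑' p : antidiagonal n, f p = ∑ p ∈ antidiagonal n, f p :=
    Finset.tsum_subtype _ f
  have hs : Summable (f ∘ e) := (summable_sigma_of_nonneg fun _ ↦ hf _).2
    ⟨fun _ ↦ Finset.summable _ _, h.summable.congr fun n ↦ (hfiber n).symm⟩
  rw [← e.hasSum_iff]
  convert hs.hasSum
  rw [hs.tsum_sigma, ← h.tsum_eq]
  exact tsum_congr fun n ↦ (hfiber n).symm

theorem hasSum_sub_succ_of_antitone {f : ℕ → ℝ} (hf : Antitone f)
    (h0 : Tendsto f atTop (𝓝 0)) : HasSum (fun n ↦ f n - f (n + 1)) (f 0) := by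
  rw [hasSum_iff_tendsto_nat_of_nonneg fun n ↦ sub_nonneg.2 (hf n.le_succ)]
  simp_rw [sum_range_sub']
  simpa only [sub_zero] using tendsto_const_nhds.sub h0

theorem hasSum_sub_add_of_antitone {f : ℕ → ℝ} (hf : Antitone f)
    (h0 : Tendsto f atTop (𝓝 0)) (k : ℕ) :
    HasSum (fun n ↦ f n - f (n + k)) (∑ i ∈ range k, f i) := by
  induction k with
  | zero => simp
  | succ k ih =>
    have step := hasSum_sub_succ_of_antitone (f := (f <| · + k))
      (hf.comp_monotone (monotone_id.add_const k)) (h0.comp (tendsto_add_atTop_nat k))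
    rw [zero_add] at step
    rw [sum_range_succ]
    convert ih.add step using 1
    ext n
    rw [add_right_comm n 1 k, add_assoc]
    ring

theorem two_mul_rpow_mul_rpow_le {x y : ℝ} (hx : 0 ≤ x) (hy : 0 ≤ y) :
    2 * (x ^ (3 / 2 : ℝ) * y ^ (3 / 2 : ℝ)) ≤ x * y * (x + y) := by
  have amgm := Real.geom_mean_le_arith_mean2_weighted (w₁ := 1 / 2) (w₂ := 1 / 2) (by norm_num)
    (by norm_num) hx hy (by norm_num)
  rw [show (3 / 2 : ℝ) = 1 + 1 / 2 by norm_num, Real.rpow_add' hx (by norm_num),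
    Real.rpow_add' hy (by norm_num), Real.rpow_one, Real.rpow_one]
  nlinarith [mul_nonneg hx hy]

noncomputable def recipProdSum (a b : ℝ) (p : ℕ × ℕ) : ℝ :=
  1 / ((p.1 + a) * (p.2 + b) * (p.1 + p.2 + a + b))

noncomputable def recipMulSumSq (b c : ℝ) (p : ℕ × ℕ) : ℝ :=
  1 / ((p.2 + b) * (p.1 + p.2 + c) ^ 2)

section

variable {a b : ℝ}

theorem recipProdSum_nonneg (ha : 0 ≤ a) (hb : 0 ≤ b) (p : ℕ × ℕ) : 0 ≤ recipProdSum a b p := by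
  unfold recipProdSum; positivity

theorem recipMulSumSq_nonneg (hb : 0 ≤ b) (c : ℝ) (p : ℕ × ℕ) : 0 ≤ recipMulSumSq b c p := by
  unfold recipMulSumSq; positivity

theorem recipProdSum_swap (a b : ℝ) (p : ℕ × ℕ) :
    recipProdSum a b p.swap = recipProdSum b a p := by
  unfold recipProdSum; simp only [Prod.fst_swap, Prod.snd_swap]; ring_nf

theorem tsum_recipProdSum_comm (a b : ℝ) :
    ∑' p, recipProdSum a b p = ∑' p, recipProdSum b a p :=
  calc ∑' p, recipProdSum a b p = ∑' p : ℕ × ℕ, recipProdSum a b p.swap :=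
        ((Equiv.prodComm ℕ ℕ).tsum_eq _).symm
    _ = _ := tsum_congr (recipProdSum_swap a b)

theorem recipProdSum_eq_add (ha : 0 < a) (hb : 0 < b) (p : ℕ × ℕ) :
    recipProdSum a b p = recipMulSumSq a (a + b) p.swap + recipMulSumSq b (a + b) p := by
  unfold recipProdSum recipMulSumSq
  simp only [Prod.fst_swap, Prod.snd_swap]
  have : (p.1 + p.2 + (a + b) : ℝ) ≠ 0 := by positivity
  field_simp
  ring

theorem recipProdSum_two_mul_add (a b : ℝ) (i j : ℕ) (p : ℕ × ℕ) :
    recipProdSum a b (2 * p.1 + i, 2 * p.2 + j) =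
      recipProdSum ((a + i) / 2) ((b + j) / 2) p / 8 := by
  unfold recipProdSum
  push_cast
  rw [div_div]
  ring_nf

theorem summable_recipProdSum (ha : 0 < a) (hb : 0 < b) : Summable (recipProdSum a b) := by
  have hu (c : ℝ) (hc : 0 < c) : Summable fun n : ℕ ↦ 1 / ((n + c) ^ (3 / 2 : ℝ)) := by
    refine ((Real.summable_one_div_nat_add_rpow c (3 / 2)).2 (by norm_num)).congr fun n ↦ ?_
    rw [abs_of_pos (by positivity)]
  refine .of_nonneg_of_le (recipProdSum_nonneg ha.le hb.le) (fun p ↦ ?_)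
    (((hu a ha).mul_of_nonneg (hu b hb) (fun _ ↦ by positivity) fun _ ↦ by positivity).mul_left
      (1 / 2))
  have hx : (0 : ℝ) < p.1 + a := by positivity
  have hy : (0 : ℝ) < p.2 + b := by positivity
  unfold recipProdSum
  rw [show (p.1 + p.2 + a + b : ℝ) = (p.1 + a) + (p.2 + b) by ring]
  calc _ ≤ 1 / (2 * ((p.1 + a) ^ (3 / 2 : ℝ) * (p.2 + b) ^ (3 / 2 : ℝ))) :=
        one_div_le_one_div_of_le (by positivity) (two_mul_rpow_mul_rpow_le hx.le hy.le)
    _ = _ := by ring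

theorem hasSum_recipMulSumSq_two_mul (ha : 0 < a) :
    HasSum (recipMulSumSq a (2 * a)) ((∑' p, recipProdSum a a p) / 2) := by
  have hsplit := recipProdSum_eq_add ha ha
  rw [← two_mul] at hsplit
  have hs : Summable (recipMulSumSq a (2 * a)) :=
    .of_nonneg_of_le (recipMulSumSq_nonneg ha.le _) (fun p ↦ by
      rw [hsplit]; linarith [recipMulSumSq_nonneg ha.le (2 * a) p.swap])
      (summable_recipProdSum ha ha)
  have hs_swap : Summable fun p : ℕ × ℕ ↦ recipMulSumSq a (2 * a) p.swap :=
    (Equiv.prodComm ℕ ℕ).summable_iff.2 hs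
  have htsum_swap :
      ∑' p : ℕ × ℕ, recipMulSumSq a (2 * a) p.swap = ∑' p, recipMulSumSq a (2 * a) p :=
    (Equiv.prodComm ℕ ℕ).tsum_eq _
  rw [tsum_congr hsplit, hs_swap.tsum_add hs, htsum_swap, add_self_div_two]
  exact hs.hasSum

theorem hasSum_recipMulSumSq_one (hb : 0 < b) :
    HasSum (recipMulSumSq b 1) (∑' p, recipProdSum 1 b p) := by
  let r : ℕ → ℝ := fun m ↦ (∑ i ∈ range (m + 1), 1 / (i + b)) / (m + 1) ^ 2
  have hrow (m : ℕ) : HasSum (fun n ↦ recipProdSum 1 b (m, n)) (r m) := by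
    have hanti : Antitone fun n : ℕ ↦ 1 / (n + b) := fun i j hij ↦
      one_div_le_one_div_of_le (by positivity) (by gcongr)
    have hlim : Tendsto (fun n : ℕ ↦ 1 / (n + b)) atTop (𝓝 0) :=
      tendsto_const_nhds.div_atTop (tendsto_atTop_add_const_right _ b tendsto_natCast_atTop_atTop)
    refine ((hasSum_sub_add_of_antitone hanti hlim (m + 1)).div_const
      ((m + 1 : ℝ) ^ 2)).congr_fun fun n ↦ ?_
    unfold recipProdSum
    push_cast
    field_simp
    ring
  have hdiag (k : ℕ) : ∑ p ∈ antidiagonal k, recipMulSumSq b 1 p = r k := by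
    rw [← Nat.sum_antidiagonal_swap, Nat.sum_antidiagonal_eq_sum_range_succ_mk]
    simp only [r, sum_div]
    refine sum_congr rfl fun i hi ↦ ?_
    have hik : ((k - i : ℕ) : ℝ) + i = k := by
      rw [Nat.cast_sub (by simpa [Nat.lt_succ_iff] using hi)]; ring
    simp only [recipMulSumSq, Prod.swap_prod_mk, hik, div_div]
  refine .of_sum_antidiagonal_of_nonneg (fun p ↦ recipMulSumSq_nonneg hb.le 1 p) ?_
  simp_rw [hdiag]
  exact (summable_recipProdSum one_pos hb).hasSum.prod_fiberwise hrow

end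

theorem tsum_recipMulSumSq_one_one :
    ∑' p, recipMulSumSq 1 1 p = ∑' n : ℕ, 1 / ((n : ℝ) + 1) ^ 3 + ∑' p, recipMulSumSq 1 2 p := by
  rw [(hasSum_recipMulSumSq_one one_pos).summable.tsum_prod_eq_tsum_zero_add]
  congr 1
  · refine tsum_congr fun n ↦ ?_
    simp only [recipMulSumSq, Nat.cast_zero, zero_add]
    ring
  · refine tsum_congr fun p ↦ ?_
    simp only [recipMulSumSq]
    push_cast
    ring_nf

theorem tsum_recipProdSum_one_one :
    ∑' p, recipProdSum 1 1 p = 2 * ∑' n : ℕ, 1 / ((n : ℝ) + 1) ^ 3 := by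
  have hrow := tsum_recipMulSumSq_one_one
  rw [(hasSum_recipMulSumSq_one one_pos).tsum_eq] at hrow
  have hhalf := (hasSum_recipMulSumSq_two_mul one_pos).tsum_eq
  norm_num at hhalf
  linarith

theorem tsum_recipProdSum_parity :
    8 * ∑' p, recipProdSum 1 1 p = ∑' p, recipProdSum (1 / 2) (1 / 2) p +
      2 * ∑' p, recipProdSum 1 (1 / 2) p + ∑' p, recipProdSum 1 1 p := by
  have h (i j : ℕ) : HasSum (fun p : ℕ × ℕ ↦ 8 * recipProdSum 1 1 (2 * p.1 + i, 2 * p.2 + j))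
      (∑' p, recipProdSum ((1 + i) / 2) ((1 + j) / 2) p) := by
    simp_rw [recipProdSum_two_mul_add, mul_div_cancel₀ _ (by norm_num : (8 : ℝ) ≠ 0)]
    exact (summable_recipProdSum (by positivity) (by positivity)).hasSum
  have h₀₀ := h 0 0
  have h₀₁ := h 0 1
  have h₁₀ := h 1 0
  have h₁₁ := h 1 1
  norm_num [tsum_recipProdSum_comm (1 / 2) 1] at h₀₀ h₀₁ h₁₀ h₁₁
  rw [← tsum_mul_left,
    (HasSum.prod_even_add_odd (f := (8 * recipProdSum 1 1 ·)) h₀₀ h₀₁ h₁₀ h₁₁).tsum_eq]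
  ring

theorem double_series_half_shift :
    Summable (fun p : ℕ × ℕ =>
        1 / (((p.2 : ℝ) + 1 / 2) * ((p.1 : ℝ) + (p.2 : ℝ) + 1) ^ 2)) ∧
      (∑' p : ℕ × ℕ, 1 / (((p.2 : ℝ) + 1 / 2) * ((p.1 : ℝ) + (p.2 : ℝ) + 1) ^ 2))
        = (7 / 2) * ∑' n : ℕ, 1 / ((n : ℝ) + 1) ^ 3 := by
  have hS := hasSum_recipMulSumSq_one (b := 1 / 2) (by norm_num)
  have hT := hasSum_recipMulSumSq_two_mul (a := 1 / 2) (by norm_num)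
  rw [mul_one_div_cancel two_ne_zero] at hT
  have hTS := hT.unique hS
  have hA := tsum_recipProdSum_one_one
  have hparity := tsum_recipProdSum_parity
  refine ⟨hS.summable, hS.tsum_eq.trans ?_⟩
  linarith
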